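/- arXiv:1511.08042 — 8 statements merged into one kernel-verified Lean document; each statement's English description precedes it below -/
import Mathlib

section
/- Let x, v₁, v₂ ∈ R^n with ‖v₁‖ = ‖v₂‖ = 1, x·v₁ = b₁, x·v₂ = b₂, |b₁| ≥ |b₂|, and α = v₁·v₂ with |α| < 1. Assume b₁ − α b₂ ≠ 0, and set s = (b₂ − α b₁)/(b₁ − α b₂). Then for every real t with v₁ + t v₂ ≠ 0, |x·(v₁ + s v₂)|/‖v₁ + s v₂‖ ≥ |x·(v₁ + t v₂)|/‖v₁ + t v₂‖. -/
open RealInnerProductSpace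

theorem stmt_1 (n : ℕ) (x v₁ v₂ : EuclideanSpace ℝ (Fin n))
    (hv₁ : ‖v₁‖ = 1) (hv₂ : ‖v₂‖ = 1)
    (b₁ b₂ α : ℝ) (hb₁ : b₁ = ⟪x, v₁⟫) (hb₂ : b₂ = ⟪x, v₂⟫)
    (hb : |b₁| ≥ |b₂|) (hα : α = ⟪v₁, v₂⟫) (hα1 : |α| < 1)
    (hden : b₁ - α * b₂ ≠ 0) (s : ℝ) (hs : s = (b₂ - α * b₁) / (b₁ - α * b₂)) :
    ∀ t : ℝ, v₁ + t • v₂ ≠ 0 →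
      |⟪x, v₁ + s • v₂⟫| / ‖v₁ + s • v₂‖ ≥ |⟪x, v₁ + t • v₂⟫| / ‖v₁ + t • v₂‖ := by
  intro t ht
  have hαlt := abs_lt.mp hα1
  have h1α : (0:ℝ) < 1 - α^2 := by nlinarith [hαlt.1, hαlt.2]
  have hnorm : ∀ c : ℝ, ‖v₁ + c • v₂‖^2 = 1 + 2*α*c + c^2 := by
    intro c
    rw [norm_add_sq_real, real_inner_smul_right, norm_smul, hv₁, hv₂, ← hα]
    simp [mul_pow, sq_abs]
    ring
  have hQt : (0:ℝ) < 1 + 2*α*t + t^2 := by nlinarith [sq_nonneg (t+α)]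
  have hQs : (0:ℝ) < 1 + 2*α*s + s^2 := by nlinarith [sq_nonneg (s+α)]
  have hnt : 0 < ‖v₁ + t • v₂‖ := norm_pos_iff.mpr ht
  have hns : 0 < ‖v₁ + s • v₂‖ := by
    nlinarith [hnorm s, norm_nonneg (v₁ + s • v₂)]
  have hinner : ∀ c : ℝ, ⟪x, v₁ + c • v₂⟫ = b₁ + c*b₂ := by
    intro c
    rw [inner_add_right, real_inner_smul_right, ← hb₁, ← hb₂]
  rw [ge_iff_le, div_le_div_iff₀ hnt hns, hinner, hinner]
  have key : (b₁+t*b₂)^2*(1+2*α*s+s^2) ≤ (b₁+s*b₂)^2*(1+2*α*t+t^2) := by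
    have hd2 : (0:ℝ) < (b₁ - α * b₂)^2 := by positivity
    have hN : (0:ℝ) ≤ b₁^2 - 2*α*b₁*b₂ + b₂^2 := by
      nlinarith [sq_nonneg (b₁ - α*b₂), mul_nonneg h1α.le (sq_nonneg b₂)]
    have hA : (b₁ + s*b₂)*(b₁ - α*b₂) = b₁^2 - 2*α*b₁*b₂ + b₂^2 := by
      rw [hs, div_mul_eq_mul_div, add_div' _ _ _ hden, div_mul_cancel₀ _ hden]; ring
    have hP : (1 + 2*α*s + s^2)*(b₁ - α*b₂)^2 = (1 - α^2)*(b₁^2 - 2*α*b₁*b₂ + b₂^2) := by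
      rw [hs]; field_simp; ring
    have hpoly : (b₁+t*b₂)^2*((1-α^2)*(b₁^2 - 2*α*b₁*b₂ + b₂^2)) ≤
        (b₁^2 - 2*α*b₁*b₂ + b₂^2)^2*(1+2*α*t+t^2) := by
      nlinarith [mul_nonneg hN (sq_nonneg ((b₂ - α*b₁) - (b₁ - α*b₂)*t))]
    have e1 : (b₁+t*b₂)^2*(1+2*α*s+s^2)*(b₁-α*b₂)^2
        = (b₁+t*b₂)^2*((1-α^2)*(b₁^2 - 2*α*b₁*b₂ + b₂^2)) := by
      rw [mul_assoc, hP]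
    have e2 : (b₁+s*b₂)^2*(1+2*α*t+t^2)*(b₁-α*b₂)^2
        = (b₁^2 - 2*α*b₁*b₂ + b₂^2)^2*(1+2*α*t+t^2) := by
      calc (b₁+s*b₂)^2*(1+2*α*t+t^2)*(b₁-α*b₂)^2
          = ((b₁+s*b₂)*(b₁-α*b₂))^2*(1+2*α*t+t^2) := by ring
        _ = (b₁^2 - 2*α*b₁*b₂ + b₂^2)^2*(1+2*α*t+t^2) := by rw [hA]
    have := e1 ▸ e2 ▸ hpoly
    exact le_of_mul_le_mul_right (by linarith [e1, e2, hpoly]) hd2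
  have hsq : (|b₁+t*b₂| * ‖v₁ + s • v₂‖)^2 ≤ (|b₁+s*b₂| * ‖v₁ + t • v₂‖)^2 := by
    rw [mul_pow, mul_pow, sq_abs, sq_abs, hnorm, hnorm]
    exact key
  have h := Real.sqrt_le_sqrt hsq
  rwa [Real.sqrt_sq (by positivity), Real.sqrt_sq (by positivity)] at h
end

section
/- Under the assumptions of the previous lemma (unit vectors v₁, v₂ with inner products b₁, b₂ with x, |b₁| ≥ |b₂|, α = v₁·v₂, |α| < 1, b₁ − α b₂ ≠ 0, s = (b₂ − α b₁)/(b₁ − α b₂)), the maximal value satisfies |x·(v₁ + s v₂)|/‖v₁ + s v₂‖ ≥ max(|b₁|, |b₂|). -/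
open RealInnerProductSpace

theorem stmt_2 (n : ℕ) (x v₁ v₂ : EuclideanSpace ℝ (Fin n))
    (hv₁ : ‖v₁‖ = 1) (hv₂ : ‖v₂‖ = 1)
    (b₁ b₂ α : ℝ) (hb₁ : b₁ = ⟪x, v₁⟫) (hb₂ : b₂ = ⟪x, v₂⟫)
    (hb : |b₁| ≥ |b₂|) (hα : α = ⟪v₁, v₂⟫) (hα1 : |α| < 1)
    (hden : b₁ - α * b₂ ≠ 0) (s : ℝ) (hs : s = (b₂ - α * b₁) / (b₁ - α * b₂)) :
    |⟪x, v₁ + s • v₂⟫| / ‖v₁ + s • v₂‖ ≥ max |b₁| |b₂| := by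
  have hα2 : 0 < 1 - α ^ 2 := by
    have h := abs_lt.mp hα1
    nlinarith [h.1, h.2]
  have hinner : ⟪x, v₁ + s • v₂⟫ = b₁ + s * b₂ := by
    rw [inner_add_right, real_inner_smul_right, ← hb₁, ← hb₂]
  have hnorm2 : ‖v₁ + s • v₂‖ ^ 2 = 1 + 2 * s * α + s ^ 2 := by
    rw [@norm_add_sq_real, real_inner_smul_right, norm_smul, hv₁, hv₂, ← hα]
    simp [Real.norm_eq_abs, sq_abs]
    ring
  have hpos2 : 0 < 1 + 2 * s * α + s ^ 2 := by nlinarith [sq_nonneg (s + α)]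
  have hnormpos : 0 < ‖v₁ + s • v₂‖ := by
    rcases (norm_nonneg (v₁ + s • v₂)).lt_or_eq with h | h
    · exact h
    · exfalso; rw [← h] at hnorm2; simp at hnorm2; linarith
  rw [max_eq_left hb, ge_iff_le, le_div_iff₀ hnormpos, hinner]
  have hd2 : 0 < (b₁ - α * b₂) ^ 2 :=
    lt_of_le_of_ne (sq_nonneg _) (Ne.symm (pow_ne_zero 2 hden))
  have hN : 0 ≤ b₁ ^ 2 + b₂ ^ 2 - 2 * α * b₁ * b₂ := by
    nlinarith [sq_nonneg (b₂ - α * b₁), sq_nonneg b₁]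
  have h1 : b₁ + s * b₂ = (b₁ ^ 2 + b₂ ^ 2 - 2 * α * b₁ * b₂) / (b₁ - α * b₂) := by
    have hsd : s * (b₁ - α * b₂) = b₂ - α * b₁ := by rw [hs]; exact div_mul_cancel₀ _ hden
    rw [eq_div_iff hden]; linear_combination b₂ * hsd
  have h2 : 1 + 2 * s * α + s ^ 2 =
      (1 - α ^ 2) * (b₁ ^ 2 + b₂ ^ 2 - 2 * α * b₁ * b₂) / (b₁ - α * b₂) ^ 2 := by
    have hsd : s * (b₁ - α * b₂) = b₂ - α * b₁ := by rw [hs]; exact div_mul_cancel₀ _ hden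
    rw [eq_div_iff (pow_ne_zero 2 hden)]
    linear_combination (2 * α * (b₁ - α * b₂) + s * (b₁ - α * b₂) + (b₂ - α * b₁)) * hsd
  have key : (|b₁| * ‖v₁ + s • v₂‖) ^ 2 ≤ |b₁ + s * b₂| ^ 2 := by
    rw [mul_pow, sq_abs, sq_abs, hnorm2, h1, h2, div_pow, mul_div_assoc', div_le_div_iff₀ hd2 hd2]
    nlinarith [mul_nonneg (mul_nonneg hN (sq_nonneg (b₂ - α * b₁))) (sq_nonneg (b₁ - α * b₂))]
  exact le_of_pow_le_pow_left₀ two_ne_zero (abs_nonneg _)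
    (by calc (|b₁| * ‖v₁ + s • v₂‖) ^ 2 ≤ |b₁ + s * b₂| ^ 2 := key)
end

section
/- With b₁ ≠ 0, α = v₁·v₂, |α| < 1, r = b₂/b₁, and s = (b₂ − α b₁)/(b₁ − α b₂) (assuming b₁ − α b₂ ≠ 0), the maximal projection ratio admits the closed form (b₁ + s b₂)²/(1 + 2αs + s²) = b₁² (1 + (r − α)²/(1 − α²)). -/
theorem stmt_3 (b₁ b₂ α r s : ℝ) (hb₁ : b₁ ≠ 0) (hα : |α| < 1)
    (hden : b₁ - α * b₂ ≠ 0) (hr : r = b₂ / b₁)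
    (hs : s = (b₂ - α * b₁) / (b₁ - α * b₂)) :
    (b₁ + s * b₂) ^ 2 / (1 + 2 * α * s + s ^ 2) =
      b₁ ^ 2 * (1 + (r - α) ^ 2 / (1 - α ^ 2)) := by
  have hα2 : 1 - α ^ 2 ≠ 0 := by nlinarith [abs_nonneg α, sq_abs α, sq_nonneg (1 - |α|)]
  have hα2' : 0 < 1 - α ^ 2 := by nlinarith [abs_nonneg α, sq_abs α]
  have hden2 : (b₁ - α * b₂) ^ 2 ≠ 0 := pow_ne_zero _ hden
  have key : 1 + 2 * α * s + s ^ 2 =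
      (1 - α ^ 2) * (b₁ ^ 2 - 2 * α * b₁ * b₂ + b₂ ^ 2) / (b₁ - α * b₂) ^ 2 := by
    subst hs; field_simp; ring
  have hq : b₁ ^ 2 - 2 * α * b₁ * b₂ + b₂ ^ 2 ≠ 0 := by
    intro h
    have h1 : (b₁ - α * b₂) ^ 2 + (1 - α ^ 2) * b₂ ^ 2 = 0 := by nlinarith
    have := sq_nonneg (b₁ - α * b₂)
    have hb2 : b₂ = 0 := by
      by_contra h2
      have : (0:ℝ) < b₂ ^ 2 := by positivity
      nlinarith
    apply hden; nlinarith
  have hne : 1 + 2 * α * s + s ^ 2 ≠ 0 := by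
    rw [key]; exact div_ne_zero (mul_ne_zero hα2 hq) hden2
  subst hs hr
  rw [key]
  have hden' : b₁ - b₂ * α ≠ 0 := by rwa [mul_comm]
  have hq'' : b₁ * (b₁ - b₂ * α * 2) + b₂ ^ 2 ≠ 0 := by convert hq using 1; ring
  field_simp
  ring
end

section
/- Let A ∈ R^{m×n} with m ≤ n and rank(A) = m, and let u ∈ R^n be a unit vector. Define Ā = A(I − u uᵀ) and G = Ā Āᵀ. Then G is nonsingular if and only if u ∉ range(Aᵀ). -/
open Matrix

theorem stmt_9 (m n : ℕ) (hmn : m ≤ n) (A : Matrix (Fin m) (Fin n) ℝ)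
    (hrank : A.rank = m) (u : Fin n → ℝ) (hu : u ⬝ᵥ u = 1)
    (Abar : Matrix (Fin m) (Fin n) ℝ) (hAbar : Abar = A * (1 - vecMulVec u u))
    (G : Matrix (Fin m) (Fin m) ℝ) (hG : G = Abar * Abarᵀ) :
    IsUnit G ↔ u ∉ Set.range Aᵀ.mulVec := by
  -- Aᵀ.mulVec is injective
  have hinj : Function.Injective Aᵀ.mulVec := by
    rw [← Matrix.coe_mulVecLin, ← LinearMap.ker_eq_bot]
    have h1 : Aᵀ.rank = m := by rw [Matrix.rank_transpose]; exact hrank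
    have h2 := LinearMap.finrank_range_add_finrank_ker (Aᵀ.mulVecLin)
    rw [Module.finrank_fintype_fun_eq_card, Fintype.card_fin] at h2
    rw [Matrix.rank] at h1
    rw [h1] at h2
    exact Submodule.finrank_eq_zero.mp (by omega)
  -- key formula: Abarᵀ.mulVec x = Aᵀ.mulVec x - (u ⬝ᵥ Aᵀ.mulVec x) • u
  have hkey : ∀ x, Abarᵀ.mulVec x = Aᵀ.mulVec x - (u ⬝ᵥ Aᵀ.mulVec x) • u := by
    have hP : ∀ w : Fin n → ℝ, (vecMulVec u u).mulVec w = (u ⬝ᵥ w) • u := by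
      intro w
      ext j
      simp only [Matrix.mulVec, dotProduct, Matrix.vecMulVec_apply, Pi.smul_apply,
        smul_eq_mul, Finset.sum_mul]
      exact Finset.sum_congr rfl (fun k _ => by ring)
    intro x
    have ht : Abarᵀ = (1 - vecMulVec u u) * Aᵀ := by
      rw [hAbar, Matrix.transpose_mul]
      congr 1
      rw [Matrix.transpose_sub, Matrix.transpose_one]
      congr 1
      ext i j
      simp [Matrix.vecMulVec_apply, mul_comm]
    rw [ht, ← Matrix.mulVec_mulVec, Matrix.sub_mulVec, Matrix.one_mulVec, hP]
  have hune : u ≠ 0 := by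
    intro h; rw [h] at hu; simp [dotProduct] at hu
  constructor
  · -- IsUnit G → u ∉ range
    rintro hunit ⟨x, hx⟩
    have hx0 : x ≠ 0 := by
      intro h; rw [h] at hx; simp [Matrix.mulVec_zero] at hx; exact hune hx.symm
    have hbar : Abarᵀ.mulVec x = 0 := by
      rw [hkey, hx, hu]; simp
    have : G.mulVec x = 0 := by
      rw [hG, ← Matrix.mulVec_mulVec, hbar, Matrix.mulVec_zero]
    have := Matrix.mulVec_injective_iff_isUnit.mpr hunit (a₁ := x) (a₂ := 0)
    simp [Matrix.mulVec_zero] at this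
    exact hx0 (this ‹G.mulVec x = 0›)
  · -- u ∉ range → IsUnit G
    intro hnr
    rw [← Matrix.mulVec_injective_iff_isUnit]
    rw [← Matrix.coe_mulVecLin, ← LinearMap.ker_eq_bot]
    rw [Submodule.eq_bot_iff]
    intro x hx
    simp only [LinearMap.mem_ker, Matrix.coe_mulVecLin] at hx
    -- G x = 0 → Abarᵀ x = 0
    have hdot : (Abarᵀ.mulVec x) ⬝ᵥ (Abarᵀ.mulVec x) = 0 := by
      have : x ⬝ᵥ G.mulVec x = 0 := by rw [hx, dotProduct_zero]
      rw [hG, ← Matrix.mulVec_mulVec, Matrix.dotProduct_mulVec,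
        ← Matrix.mulVec_transpose] at this
      exact this
    have hbar : Abarᵀ.mulVec x = 0 := by
      have := dotProduct_self_eq_zero.mp hdot
      exact this
    rw [hkey] at hbar
    set c := u ⬝ᵥ Aᵀ.mulVec x with hc
    have hAx : Aᵀ.mulVec x = c • u := by
      rwa [sub_eq_zero] at hbar
    by_contra hx0
    have hAxne : Aᵀ.mulVec x ≠ 0 := by
      intro h
      exact hx0 (hinj (h.trans (Matrix.mulVec_zero _).symm))
    have hcne : c ≠ 0 := by
      intro h; rw [h, zero_smul] at hAx; exact hAxne hAx
    apply hnr
    exact ⟨c⁻¹ • x, by rw [Matrix.mulVec_smul, hAx, smul_smul, inv_mul_cancel₀ hcne, one_smul]⟩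
end

section
/- Let A ∈ R^{m×n} with A Aᵀ invertible, x ∈ R^n with Ax = b, and p ∈ R^n with ⟨x − p, p⟩ = 0 (p is a projection of x). Let q be the orthogonal projection of x onto W = range(Aᵀ) + span{p}. If A p = b, then q = p. -/
open Matrix

theorem stmt_12 (m n : ℕ) (A : Matrix (Fin m) (Fin n) ℝ)
    (hAAT : IsUnit (A * Aᵀ))
    (x : Fin n → ℝ) (b : Fin m → ℝ) (hb : A.mulVec x = b)
    (p : Fin n → ℝ) (hp : (x - p) ⬝ᵥ p = 0)
    (W : Submodule ℝ (Fin n → ℝ))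
    (hW : W = LinearMap.range Aᵀ.mulVecLin ⊔ Submodule.span ℝ {p})
    (q : Fin n → ℝ) (hqW : q ∈ W) (hqproj : ∀ w ∈ W, (x - q) ⬝ᵥ w = 0)
    (hAp : A.mulVec p = b) :
    q = p := by
  have hpW : p ∈ W := by
    rw [hW]
    exact Submodule.mem_sup_right (Submodule.mem_span_singleton_self p)
  have hAxp : A.mulVec (x - p) = 0 := by
    rw [Matrix.mulVec_sub, hb, hAp, sub_self]
  have hpperp : ∀ w ∈ W, (x - p) ⬝ᵥ w = 0 := by
    intro w hw
    rw [hW] at hw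
    rcases Submodule.mem_sup.mp hw with ⟨u, hu, v, hv, rfl⟩
    rcases hu with ⟨y, rfl⟩
    rcases Submodule.mem_span_singleton.mp hv with ⟨c, rfl⟩
    rw [dotProduct_add, dotProduct_smul, hp, smul_zero, add_zero]
    have : Aᵀ.mulVecLin y = Aᵀ.mulVec y := rfl
    rw [this, dotProduct_mulVec, vecMul_transpose, hAxp, zero_dotProduct]
  have key : (q - p) ⬝ᵥ (q - p) = 0 := by
    have h1 : (x - p) ⬝ᵥ (q - p) = 0 := hpperp _ (Submodule.sub_mem W hqW hpW)
    have h2 : (x - q) ⬝ᵥ (q - p) = 0 := hqproj _ (Submodule.sub_mem W hqW hpW)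
    have : (q - p) = (x - p) - (x - q) := by ring_nf
    nth_rewrite 1 [this]
    rw [sub_dotProduct, h1, h2, sub_zero]
  have := dotProduct_self_eq_zero.mp key
  exact sub_eq_zero.mp this
end

section
/- Let A ∈ R^{m×n} of full row rank, x ∈ R^n with Ax = b, p ∈ R^n with ⟨x − p, p⟩ = 0, and let q = P_W(x) be the orthogonal projection of x onto W = range(Aᵀ) + span{p}. If ‖q‖ = ‖p‖, then A p = b. -/
open Matrix

theorem stmt_13 (m n : ℕ) (A : Matrix (Fin m) (Fin n) ℝ) (hrank : A.rank = m)
    (x : Fin n → ℝ) (b : Fin m → ℝ) (hb : A.mulVec x = b)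
    (p : Fin n → ℝ) (hp : (x - p) ⬝ᵥ p = 0)
    (W : Submodule ℝ (Fin n → ℝ))
    (hW : W = LinearMap.range Aᵀ.mulVecLin ⊔ Submodule.span ℝ {p})
    (q : Fin n → ℝ) (hqW : q ∈ W) (hqproj : ∀ w ∈ W, (x - q) ⬝ᵥ w = 0)
    (hnorm : q ⬝ᵥ q = p ⬝ᵥ p) :
    A.mulVec p = b := by
  have hpW : p ∈ W := by
    rw [hW]
    exact Submodule.mem_sup_right (Submodule.mem_span_singleton_self p)
  have hxp : x ⬝ᵥ p = p ⬝ᵥ p := by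
    have := hp
    rw [sub_dotProduct] at this
    linarith
  have hqp : q ⬝ᵥ p = p ⬝ᵥ p := by
    have h := hqproj p hpW
    rw [sub_dotProduct] at h
    linarith
  have hpq : p ⬝ᵥ q = p ⬝ᵥ p := by
    rw [dotProduct_comm]; exact hqp
  have hqep : q = p := by
    have hzero : (q - p) ⬝ᵥ (q - p) = 0 := by
      rw [sub_dotProduct, dotProduct_sub, dotProduct_sub]
      linarith
    have := (dotProduct_self_eq_zero (v := q - p)).mp hzero
    exact sub_eq_zero.mp this
  funext i
  have hrow : (fun j => A i j) ∈ W := by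
    rw [hW]
    refine Submodule.mem_sup_left ⟨Pi.single i 1, ?_⟩
    funext j
    simp [mulVecLin, mulVec, dotProduct, Pi.single_apply]
  have h := hqproj _ hrow
  rw [hqep, sub_dotProduct] at h
  have h2 : p ⬝ᵥ (fun j => A i j) = x ⬝ᵥ (fun j => A i j) := by linarith
  rw [← hb]
  show A i ⬝ᵥ p = A i ⬝ᵥ x
  rw [dotProduct_comm (A i) p, dotProduct_comm (A i) x]
  exact h2
end

section
/- Let x ∈ R^n, let A ∈ R^{m×n} have full row rank with b = Ax, let p ∈ R^n satisfy ⟨x − p, p⟩ = 0 with p ∉ range(Aᵀ), and suppose Ā = A(I − u uᵀ) has full row rank where u = p/‖p‖ (p ≠ 0). Let q = P_W(x) with W = range(Aᵀ) + span{p}, and set d = A p/‖p‖², v = (Ā Āᵀ)^{-1}(b − ⟨p, x⟩ d). Then ‖q‖² − ‖p‖² = (b − ⟨p,x⟩ d)ᵀ (Ā Āᵀ)^{-1} (b − ⟨p,x⟩ d). -/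
open Matrix

lemma adj_dot {m n : ℕ} (M : Matrix (Fin m) (Fin n) ℝ) (v : Fin m → ℝ) (w : Fin n → ℝ) :
    (Mᵀ.mulVec v) ⬝ᵥ w = v ⬝ᵥ M.mulVec w := by
  rw [mulVec_transpose, dotProduct_mulVec]

lemma vecMulVec_mulVec' {n : ℕ} (u v w : Fin n → ℝ) :
    (vecMulVec u v).mulVec w = (v ⬝ᵥ w) • u := by
  ext i
  simp [vecMulVec_apply, mulVec, dotProduct, Finset.mul_sum, mul_assoc, mul_comm, mul_left_comm]

theorem stmt_14 (m n : ℕ) (A : Matrix (Fin m) (Fin n) ℝ) (hrank : A.rank = m)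
    (x : Fin n → ℝ) (b : Fin m → ℝ) (hb : A.mulVec x = b)
    (p : Fin n → ℝ) (hp0 : p ≠ 0) (hp : (x - p) ⬝ᵥ p = 0)
    (hpA : p ∉ Set.range Aᵀ.mulVec)
    (u : Fin n → ℝ) (hu : u = (Real.sqrt (p ⬝ᵥ p))⁻¹ • p)
    (Abar : Matrix (Fin m) (Fin n) ℝ) (hAbar : Abar = A * (1 - vecMulVec u u))
    (hAbarRank : Abar.rank = m)
    (d : Fin m → ℝ) (hd : d = (p ⬝ᵥ p)⁻¹ • A.mulVec p)
    (W : Submodule ℝ (Fin n → ℝ))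
    (hW : W = LinearMap.range Aᵀ.mulVecLin ⊔ Submodule.span ℝ {p})
    (q : Fin n → ℝ) (hqW : q ∈ W) (hqproj : ∀ w ∈ W, (x - q) ⬝ᵥ w = 0) :
    q ⬝ᵥ q - p ⬝ᵥ p =
      (b - (p ⬝ᵥ x) • d) ⬝ᵥ (Abar * Abarᵀ)⁻¹.mulVec (b - (p ⬝ᵥ x) • d) := by
  -- basic scalar facts
  have hpp_pos : 0 < p ⬝ᵥ p := by
    rcases lt_or_eq_of_le (Finset.sum_nonneg fun i _ => mul_self_nonneg (p i) :
        (0:ℝ) ≤ p ⬝ᵥ p) with h | h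
    · exact h
    · exact absurd (dotProduct_self_eq_zero.1 h.symm) hp0
  set s : ℝ := Real.sqrt (p ⬝ᵥ p) with hs_def
  have hs : s * s = p ⬝ᵥ p := Real.mul_self_sqrt hpp_pos.le
  have hs0 : s ≠ 0 := by
    intro h; rw [h, zero_mul] at hs; exact hpp_pos.ne hs
  have hup : u ⬝ᵥ p = s := by
    rw [hu, smul_dotProduct, ← hs, smul_eq_mul]
    field_simp
  have hsu : s • u = p := by
    rw [hu, smul_smul, mul_inv_cancel₀ hs0, one_smul]
  have huu : u ⬝ᵥ u = 1 := by
    rw [hu, smul_dotProduct, dotProduct_smul, smul_eq_mul, smul_eq_mul, ← hs]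
    field_simp
  have hxp : x ⬝ᵥ p = p ⬝ᵥ p := by
    have := hp; rw [sub_dotProduct, sub_eq_zero] at this; exact this
  have hpx : p ⬝ᵥ x = p ⬝ᵥ p := by rw [dotProduct_comm]; exact hxp
  have hux : u ⬝ᵥ x = s := by
    rw [hu, smul_dotProduct, smul_eq_mul, hpx, ← hs]
    field_simp
  -- action of Abar
  have habar : ∀ w : Fin n → ℝ, Abar.mulVec w = A.mulVec (w - (u ⬝ᵥ w) • u) := by
    intro w
    rw [hAbar, ← mulVec_mulVec, sub_mulVec, one_mulVec, vecMulVec_mulVec']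
  have habarp : Abar.mulVec p = 0 := by
    rw [habar, hup, hsu, sub_self, mulVec_zero]
  have habaru : Abar.mulVec u = 0 := by
    rw [habar, huu, one_smul, sub_self, mulVec_zero]
  -- c = Abar x
  set c : Fin m → ℝ := b - (p ⬝ᵥ x) • d with hc_def
  have hc : c = Abar.mulVec x := by
    rw [hc_def, habar, hux, hsu, mulVec_sub, hb, hd, hpx, smul_smul,
      mul_inv_cancel₀ hpp_pos.ne', one_smul]
  -- invertibility of M = Abar * Abarᵀ
  set M : Matrix (Fin m) (Fin m) ℝ := Abar * Abarᵀ with hM_def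
  have hMrank : M.rank = m := by rw [hM_def, rank_self_mul_transpose]; exact hAbarRank
  have hMunit : IsUnit M := by
    rw [← Matrix.mulVec_surjective_iff_isUnit]
    have htop : LinearMap.range M.mulVecLin = ⊤ := by
      apply Submodule.eq_top_of_finrank_eq
      rw [← Matrix.rank, hMrank, Module.finrank_fintype_fun_eq_card, Fintype.card_fin]
    intro y
    have : y ∈ LinearMap.range M.mulVecLin := htop ▸ Submodule.mem_top
    obtain ⟨z, hz⟩ := this
    exact ⟨z, hz⟩
  have hMinv : M * M⁻¹ = 1 := Matrix.mul_nonsing_inv _ ((Matrix.isUnit_iff_isUnit_det _).1 hMunit)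
  set v : Fin m → ℝ := M⁻¹.mulVec c with hv_def
  have hMv : M.mulVec v = c := by
    rw [hv_def, mulVec_mulVec, hMinv, one_mulVec]
  set q' : Fin n → ℝ := Abarᵀ.mulVec v + p with hq'_def
  -- u ⊥ range Abarᵀ
  have huAbarT : ∀ y : Fin m → ℝ, u ⬝ᵥ Abarᵀ.mulVec y = 0 := by
    intro y
    rw [dotProduct_comm, adj_dot, habaru, dotProduct_zero]
  have hpAbarT : ∀ y : Fin m → ℝ, Abarᵀ.mulVec y ⬝ᵥ p = 0 := by
    intro y
    rw [adj_dot, habarp, dotProduct_zero]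
  -- A q' = b
  have hAw : A.mulVec (Abarᵀ.mulVec v) = c := by
    have h1 := habar (Abarᵀ.mulVec v)
    rw [huAbarT, zero_smul, sub_zero] at h1
    rw [← h1, mulVec_mulVec, ← hM_def, hMv]
  have hAq' : A.mulVec q' = b := by
    rw [hq'_def, mulVec_add, hAw, hc_def, hd, hpx, smul_smul,
      mul_inv_cancel₀ hpp_pos.ne', one_smul]
    abel
  -- q' ∈ W
  have hAbarT_decomp : ∀ y : Fin m → ℝ,
      Abarᵀ.mulVec y = Aᵀ.mulVec y - (u ⬝ᵥ Aᵀ.mulVec y) • u := by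
    intro y
    have huuT : (vecMulVec u u)ᵀ = vecMulVec u u := by
      ext i j; simp [vecMulVec_apply, mul_comm]
    rw [hAbar, transpose_mul, transpose_sub, transpose_one, huuT, ← mulVec_mulVec,
      sub_mulVec, one_mulVec, vecMulVec_mulVec']
  have hq'W : q' ∈ W := by
    rw [hq'_def, hAbarT_decomp, hW]
    have h1 : Aᵀ.mulVec v ∈ LinearMap.range Aᵀ.mulVecLin := ⟨v, rfl⟩
    have h2 : (- ((u ⬝ᵥ Aᵀ.mulVec v) • u) + p) ∈ Submodule.span ℝ {p} := by
      apply Submodule.add_mem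
      · rw [hu, smul_smul]
        exact Submodule.neg_mem _ (Submodule.smul_mem _ _ (Submodule.mem_span_singleton_self p))
      · exact Submodule.mem_span_singleton_self p
    have := Submodule.add_mem_sup h1 h2
    convert this using 1
    abel
  -- x - q' ⊥ W
  have hq'proj : ∀ w ∈ W, (x - q') ⬝ᵥ w = 0 := by
    intro w hw
    rw [hW] at hw
    obtain ⟨w1, hw1, w2, hw2, rfl⟩ := Submodule.mem_sup.1 hw
    obtain ⟨y, rfl⟩ := hw1
    obtain ⟨t, rfl⟩ := Submodule.mem_span_singleton.1 hw2
    rw [dotProduct_add]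
    have hA0 : A.mulVec (x - q') = 0 := by
      rw [mulVec_sub, hb, hAq', sub_self]
    have e1 : (x - q') ⬝ᵥ Aᵀ.mulVecLin y = 0 := by
      show (x - q') ⬝ᵥ Aᵀ.mulVec y = 0
      rw [dotProduct_comm, adj_dot, hA0, dotProduct_zero]
    have e2 : (x - q') ⬝ᵥ (t • p) = 0 := by
      rw [dotProduct_smul, hq'_def, sub_dotProduct, add_dotProduct, hxp, hpAbarT v]
      simp
    rw [e1, e2, add_zero]
  -- q = q'
  have hqq' : q = q' := by
    have hmem : q - q' ∈ W := Submodule.sub_mem W hqW hq'W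
    have h0 : (q - q') ⬝ᵥ (q - q') = 0 := by
      have e1 := hqproj _ hmem
      have e2 := hq'proj _ hmem
      have key : (x - q') ⬝ᵥ (q - q') - (x - q) ⬝ᵥ (q - q') = (q - q') ⬝ᵥ (q - q') := by
        rw [← sub_dotProduct]
        congr 1
        abel
      rw [← key, e1, e2, sub_zero]
    have := dotProduct_self_eq_zero.1 h0
    exact sub_eq_zero.1 this
  -- final computation
  rw [hqq', hq'_def]
  have hcross : Abarᵀ.mulVec v ⬝ᵥ p = 0 := hpAbarT v
  have hcross' : p ⬝ᵥ Abarᵀ.mulVec v = 0 := by rw [dotProduct_comm]; exact hpAbarT v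
  have hself : Abarᵀ.mulVec v ⬝ᵥ Abarᵀ.mulVec v = c ⬝ᵥ v := by
    rw [adj_dot, mulVec_mulVec, ← hM_def, hMv, dotProduct_comm]
  rw [add_dotProduct, dotProduct_add, dotProduct_add, hcross, hcross', hself]
  ring
end

section
/- Let A ∈ R^{m×n} have full row rank, x ∈ R^n, b = Ax, p ∈ R^n nonzero with ⟨x − p, p⟩ = 0, u = p/‖p‖, Ā = A(I − u uᵀ) of full row rank. Then the vector q = p + Āᵀ v, where v = (Ā Āᵀ)^{-1}(b − ⟨p,x⟩ (A p)/‖p‖²), is the orthogonal projection of x onto W = range(Aᵀ) + span{p}; in particular ⟨x − q, w⟩ = 0 for all w ∈ W and q ∈ W. -/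
open Matrix

lemma aux_isUnit_of_rank {m : ℕ} (M : Matrix (Fin m) (Fin m) ℝ) (h : M.rank = m) :
    IsUnit M := by
  rw [← Matrix.mulVec_surjective_iff_isUnit]
  have hr : LinearMap.range M.mulVecLin = ⊤ := by
    apply Submodule.eq_top_of_finrank_eq
    rw [← Matrix.rank, h, Module.finrank_pi]
    simp
  intro y
  have : y ∈ LinearMap.range M.mulVecLin := hr ▸ Submodule.mem_top
  obtain ⟨z, hz⟩ := this
  exact ⟨z, hz⟩

lemma aux_vecMulVec_mulVec {n : ℕ} (u w p : Fin n → ℝ) :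
    (vecMulVec u w).mulVec p = (w ⬝ᵥ p) • u := by
  funext i
  simp only [Matrix.mulVec, Matrix.vecMulVec_apply, dotProduct, Pi.smul_apply,
    smul_eq_mul, Finset.sum_mul, of_apply]
  exact Finset.sum_congr rfl fun j _ => by ring

lemma aux_vecMulVec_transpose {n : ℕ} (u : Fin n → ℝ) :
    (vecMulVec u u)ᵀ = vecMulVec u u := by
  ext i j
  simp [Matrix.vecMulVec_apply, mul_comm]

theorem stmt_15 (m n : ℕ) (A : Matrix (Fin m) (Fin n) ℝ) (hrank : A.rank = m)
    (x : Fin n → ℝ) (b : Fin m → ℝ) (hb : A.mulVec x = b)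
    (p : Fin n → ℝ) (hp0 : p ≠ 0) (hp : (x - p) ⬝ᵥ p = 0)
    (u : Fin n → ℝ) (hu : u = (Real.sqrt (p ⬝ᵥ p))⁻¹ • p)
    (Abar : Matrix (Fin m) (Fin n) ℝ) (hAbar : Abar = A * (1 - vecMulVec u u))
    (hAbarRank : Abar.rank = m)
    (d : Fin m → ℝ) (hd : d = (p ⬝ᵥ p)⁻¹ • A.mulVec p)
    (v : Fin m → ℝ) (hv : v = (Abar * Abarᵀ)⁻¹.mulVec (b - (p ⬝ᵥ x) • d))
    (W : Submodule ℝ (Fin n → ℝ))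
    (hW : W = LinearMap.range Aᵀ.mulVecLin ⊔ Submodule.span ℝ {p})
    (q : Fin n → ℝ) (hq : q = p + Abarᵀ.mulVec v) :
    q ∈ W ∧ ∀ w ∈ W, (x - q) ⬝ᵥ w = 0 := by
  -- basic facts about p
  have hpp_nonneg : (0:ℝ) ≤ p ⬝ᵥ p :=
    Finset.sum_nonneg fun i _ => mul_self_nonneg (p i)
  have hpp_pos : (0:ℝ) < p ⬝ᵥ p := by
    rcases lt_or_eq_of_le hpp_nonneg with h | h
    · exact h
    · exact absurd ((dotProduct_self_eq_zero).mp h.symm) hp0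
  have hpp_ne : (p ⬝ᵥ p) ≠ 0 := ne_of_gt hpp_pos
  have hsq : Real.sqrt (p ⬝ᵥ p) * Real.sqrt (p ⬝ᵥ p) = p ⬝ᵥ p :=
    Real.mul_self_sqrt hpp_nonneg
  have hsq_ne : Real.sqrt (p ⬝ᵥ p) ≠ 0 := by
    intro h; rw [h, mul_zero] at hsq; exact hpp_ne hsq.symm
  -- ⟨p, x⟩ = ⟨p, p⟩
  have hpx : p ⬝ᵥ x = p ⬝ᵥ p := by
    have h0 := hp
    rw [sub_dotProduct] at h0
    have h2 : x ⬝ᵥ p = p ⬝ᵥ p := by linarith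
    rw [dotProduct_comm p x, h2]
  -- u ⬝ᵥ p and (u ⬝ᵥ p) • u = p
  have hup : u ⬝ᵥ p = Real.sqrt (p ⬝ᵥ p) := by
    rw [hu, smul_dotProduct, smul_eq_mul]
    field_simp
    exact (Real.sq_sqrt hpp_nonneg).symm
  have hupu : (u ⬝ᵥ p) • u = p := by
    rw [hup, hu, smul_smul, mul_inv_cancel₀ hsq_ne, one_smul]
  have huu : u ⬝ᵥ u = 1 := by
    rw [hu, smul_dotProduct, dotProduct_smul, smul_eq_mul, smul_eq_mul]
    field_simp
    exact (Real.sq_sqrt hpp_nonneg).symm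
  -- Abar kills p and u
  have hAbarp : Abar.mulVec p = 0 := by
    rw [hAbar, ← Matrix.mulVec_mulVec]
    have h1 : (1 - vecMulVec u u).mulVec p = 0 := by
      rw [Matrix.sub_mulVec, Matrix.one_mulVec, aux_vecMulVec_mulVec, hupu, sub_self]
    rw [h1, Matrix.mulVec_zero]
  have hAbaru : Abar.mulVec u = 0 := by
    rw [hAbar, ← Matrix.mulVec_mulVec]
    have h1 : (1 - vecMulVec u u).mulVec u = 0 := by
      rw [Matrix.sub_mulVec, Matrix.one_mulVec, aux_vecMulVec_mulVec, huu, one_smul, sub_self]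
    rw [h1, Matrix.mulVec_zero]
  -- invertibility of Abar * Abarᵀ
  have hGunit : IsUnit (Abar * Abarᵀ) := by
    apply aux_isUnit_of_rank
    rw [Matrix.rank_self_mul_transpose, hAbarRank]
  have hGinv : (Abar * Abarᵀ) * (Abar * Abarᵀ)⁻¹ = 1 :=
    Matrix.mul_nonsing_inv _ ((Matrix.isUnit_iff_isUnit_det _).mp hGunit)
  -- A * Abarᵀ acts like Abar * Abarᵀ on v
  have hAAbar : A.mulVec (Abarᵀ.mulVec v) = (Abar * Abarᵀ).mulVec v := by
    have hA : A = Abar + A * vecMulVec u u := by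
      rw [hAbar, Matrix.mul_sub, Matrix.mul_one]; abel
    conv_lhs => rw [hA]
    rw [Matrix.add_mulVec, Matrix.mulVec_mulVec]
    have h2 : (A * vecMulVec u u).mulVec (Abarᵀ.mulVec v)
        = A.mulVec ((vecMulVec u u).mulVec (Abarᵀ.mulVec v)) :=
      (Matrix.mulVec_mulVec _ _ _).symm
    have h1 : (vecMulVec u u).mulVec (Abarᵀ.mulVec v) = 0 := by
      rw [aux_vecMulVec_mulVec]
      have h3 : u ⬝ᵥ Abarᵀ.mulVec v = Abar.mulVec u ⬝ᵥ v := by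
        rw [Matrix.dotProduct_mulVec, Matrix.vecMul_transpose, dotProduct_comm]
      rw [h3, hAbaru, zero_dotProduct, zero_smul]
    rw [h2, h1, Matrix.mulVec_zero, add_zero]
  -- A q = b
  have hAq : A.mulVec q = b := by
    rw [hq, Matrix.mulVec_add, hAAbar, hv, Matrix.mulVec_mulVec, hGinv, Matrix.one_mulVec,
      hd, hpx]
    have h1 : (p ⬝ᵥ p) • (p ⬝ᵥ p)⁻¹ • A.mulVec p = A.mulVec p := by
      rw [smul_smul, mul_inv_cancel₀ hpp_ne, one_smul]
    rw [h1]
    abel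
  -- (x - q) ⬝ᵥ p = 0
  have hxqp : (x - q) ⬝ᵥ p = 0 := by
    rw [hq, sub_dotProduct, add_dotProduct]
    have h1 : Abarᵀ.mulVec v ⬝ᵥ p = 0 := by
      rw [dotProduct_comm, Matrix.dotProduct_mulVec, Matrix.vecMul_transpose,
        hAbarp, zero_dotProduct]
    rw [h1, add_zero]
    have h0 := hp
    rw [sub_dotProduct] at h0
    linarith
  -- A (x - q) = 0
  have hAxq : A.mulVec (x - q) = 0 := by
    rw [Matrix.mulVec_sub, hb, hAq, sub_self]
  constructor
  · -- q ∈ W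
    have hAbarT : Abarᵀ.mulVec v = Aᵀ.mulVec v - (u ⬝ᵥ Aᵀ.mulVec v) • u := by
      rw [hAbar, Matrix.transpose_mul, Matrix.transpose_sub, Matrix.transpose_one,
        aux_vecMulVec_transpose, ← Matrix.mulVec_mulVec, Matrix.sub_mulVec,
        Matrix.one_mulVec, aux_vecMulVec_mulVec]
    rw [hW, hq, hAbarT]
    have hmem : p + (Aᵀ.mulVec v - (u ⬝ᵥ Aᵀ.mulVec v) • u)
        = Aᵀ.mulVec v + (p - (u ⬝ᵥ Aᵀ.mulVec v) • u) := by abel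
    rw [hmem]
    apply Submodule.add_mem_sup (LinearMap.mem_range_self _ _)
    refine Submodule.sub_mem _ (Submodule.mem_span_singleton_self p) ?_
    exact Submodule.smul_mem _ _ (Submodule.mem_span_singleton.mpr ⟨_, hu.symm⟩)
  · -- orthogonality
    intro w hw
    rw [hW] at hw
    obtain ⟨y, hy, z, hz, rfl⟩ := Submodule.mem_sup.mp hw
    obtain ⟨c, hc⟩ := hy
    obtain ⟨t, rfl⟩ := Submodule.mem_span_singleton.mp hz
    rw [dotProduct_add, ← hc]
    have h1 : (x - q) ⬝ᵥ Aᵀ.mulVec c = 0 := by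
      rw [Matrix.dotProduct_mulVec, Matrix.vecMul_transpose, hAxq, zero_dotProduct]
    have h2 : (x - q) ⬝ᵥ t • p = 0 := by
      rw [dotProduct_smul, hxqp, smul_zero]
    simp only [Matrix.mulVecLin_apply] at h1 ⊢
    rw [h1, h2, add_zero]
end
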